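/- Let S₁,…,S_n, S_{n+1} be exchangeable real-valued random variables with continuous joint distribution (no ties almost surely). For α ∈ (0,1), let q_{α/2} and q_{1−α/2} denote the empirical (α/2)- and (1−α/2)-quantiles of S₁,…,S_n. Then P(q_{α/2} ≤ S_{n+1} ≤ q_{1−α/2}) ≥ 1 − α − 2/(n+1). -/

import Mathlib

/-!
Rank the `n + 1` scores. By exchangeability every score has the same rank distribution, and
without ties the ranks form a permutation of `1, …, n + 1`; so the rank of the test score
`S_{n+1}` is uniform on `{1, …, n + 1}`. The test score can only fall outside
`[q_{α/2}, q_{1-α/2}]` if its rank is at most `⌈αn/2⌉` or exceeds `⌈(1 - α/2)n⌉`, which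
happens with probability at most `(αn + 2)/(n + 1)`.
-/

open MeasureTheory

/-- Empirical `γ`-quantile of `s₁,…,s_n`: the `⌈γ n⌉`-th order statistic. -/
noncomputable def empQuantile {n : ℕ} (γ : ℝ) (s : Fin n → ℝ) : ℝ :=
  ((List.ofFn s).mergeSort (· ≤ ·)).getD (⌈γ * n⌉.toNat - 1) 0

open Finset

theorem List.countP_ofFn {α : Type*} {n : ℕ} (f : Fin n → α) (p : α → Prop) [DecidablePred p] :
    (List.ofFn f).countP p = #{j | p (f j)} := by
  rw [← Multiset.coe_countP, ← Fin.univ_val_map, Multiset.countP_map]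
  rfl

theorem List.countP_eq_card_filter_getElem {α : Type*} (l : List α) (p : α → Prop)
    [DecidablePred p] : l.countP p = #{j : Fin l.length | p l[j]} := by
  simpa using List.countP_ofFn (fun j : Fin l.length => l[j]) p

namespace List.SortedLE

variable {α : Type*} [LinearOrder α] {l : List α} {i : ℕ}

theorem countP_lt_getElem_le (hl : l.SortedLE) (hi : i < l.length) :
    l.countP (· < l[i]) ≤ i := by
  calc l.countP (· < l[i]) = #{j : Fin l.length | l[j] < l[i]} := countP_eq_card_filter_getElem ..
    _ ≤ #(Iio (⟨i, hi⟩ : Fin l.length)) :=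
        card_le_card fun j hj => mem_Iio.2 <|
          lt_of_not_ge fun h => (hl.monotone_get h).not_gt (by simpa using hj)
    _ = i := Fin.card_Iio _

theorem lt_countP_le_getElem (hl : l.SortedLE) (hi : i < l.length) :
    i < l.countP (· ≤ l[i]) := by
  rw [countP_eq_card_filter_getElem]
  calc i < #(Iic (⟨i, hi⟩ : Fin l.length)) := by simp
    _ ≤ #{j : Fin l.length | l[j] ≤ l[i]} :=
        card_le_card fun j hj => by simpa using hl.monotone_get (mem_Iic.1 hj)

end List.SortedLE

section EmpQuantile

variable {n : ℕ} {γ : ℝ}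

theorem natCeil_mul_mem_Icc (hγ : 0 < γ) (hγ1 : γ ≤ 1) (hn : 0 < n) : ⌈γ * n⌉₊ ∈ Icc 1 n :=
  mem_Icc.2 ⟨Nat.one_le_ceil_iff.2 (by positivity),
    Nat.ceil_le.2 (mul_le_of_le_one_left n.cast_nonneg hγ1)⟩

theorem empQuantile_eq_getElem (s : Fin n → ℝ) (hk : ⌈γ * n⌉₊ - 1 < n) :
    empQuantile γ s = ((List.ofFn s).mergeSort (· ≤ ·))[⌈γ * n⌉₊ - 1]'(by simpa using hk) := by
  rw [empQuantile, Int.ceil_toNat, List.getD_eq_getElem]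

theorem card_lt_empQuantile_lt_natCeil (s : Fin n → ℝ) (hk : ⌈γ * n⌉₊ ∈ Icc 1 n) :
    #{j | s j < empQuantile γ s} < ⌈γ * n⌉₊ := by
  obtain ⟨hk1, hkn⟩ := mem_Icc.1 hk
  have hi : ⌈γ * n⌉₊ - 1 < n := by omega
  have hl := List.sortedLE_mergeSort (l := List.ofFn s)
  have := hl.countP_lt_getElem_le (by simpa using hi)
  rw [(List.mergeSort_perm _ _).countP_eq, List.countP_ofFn, ← empQuantile_eq_getElem s hi] at this
  omega

theorem natCeil_le_card_le_empQuantile (s : Fin n → ℝ) (hk : ⌈γ * n⌉₊ ∈ Icc 1 n) :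
    ⌈γ * n⌉₊ ≤ #{j | s j ≤ empQuantile γ s} := by
  obtain ⟨hk1, hkn⟩ := mem_Icc.1 hk
  have hi : ⌈γ * n⌉₊ - 1 < n := by omega
  have hl := List.sortedLE_mergeSort (l := List.ofFn s)
  have := hl.lt_countP_le_getElem (by simpa using hi)
  rw [(List.mergeSort_perm _ _).countP_eq, List.countP_ofFn, ← empQuantile_eq_getElem s hi] at this
  omega

end EmpQuantile

section SampleRank

variable {ι κ α : Type*} [Fintype ι] [Fintype κ] [LinearOrder α] {v : ι → α} {i j : ι}

def sampleRank (v : ι → α) (i : ι) : ℕ := #{j | v j ≤ v i}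

theorem sampleRank_pos (v : ι → α) (i : ι) : 0 < sampleRank v i :=
  card_pos.2 ⟨i, by simp⟩

theorem sampleRank_le_card (v : ι → α) (i : ι) : sampleRank v i ≤ Fintype.card ι :=
  card_le_univ _

theorem sampleRank_comp_equiv (v : ι → α) (σ : κ ≃ ι) (k : κ) :
    sampleRank (v ∘ σ) k = sampleRank v (σ k) := by
  simp only [sampleRank, card_filter, Function.comp_apply]
  exact σ.sum_comp fun j => if v j ≤ v (σ k) then 1 else 0

theorem sampleRank_lt_sampleRank (h : v i < v j) : sampleRank v i < sampleRank v j :=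
  card_lt_card <| (ssubset_iff_of_subset (monotone_filter_right _ fun _ _ hk => hk.trans h.le)).2
    ⟨j, by simpa using h⟩

theorem sampleRank_injective (hv : Function.Injective v) : Function.Injective (sampleRank v) := by
  intro i j hij
  by_contra hne
  rcases (hv.ne hne).lt_or_gt with h | h
  · exact (sampleRank_lt_sampleRank h).ne hij
  · exact (sampleRank_lt_sampleRank h).ne' hij

theorem existsUnique_sampleRank_eq (hv : Function.Injective v) {r : ℕ}
    (hr : r ∈ Icc 1 (Fintype.card ι)) : ∃! i, sampleRank v i = r := by
  have himage : univ.image (sampleRank v) = Icc 1 (Fintype.card ι) :=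
    eq_of_subset_of_card_le
      (fun r hr => by
        obtain ⟨i, -, rfl⟩ := mem_image.1 hr
        exact mem_Icc.2 ⟨sampleRank_pos v i, sampleRank_le_card v i⟩)
      (by rw [card_image_of_injective _ (sampleRank_injective hv)]; simp)
  obtain ⟨i, -, rfl⟩ := mem_image.1 (himage ▸ hr)
  exact ⟨i, rfl, fun j hj => sampleRank_injective hv hj⟩

theorem sampleRank_last {n : ℕ} (v : Fin (n + 1) → α) :
    sampleRank v (Fin.last n) = #{j : Fin n | v j.castSucc ≤ v (Fin.last n)} + 1 := by
  rw [sampleRank, card_filter, Fin.sum_univ_castSucc, if_pos le_rfl, ← card_filter]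

variable [TopologicalSpace α] [MeasurableSpace α] [OpensMeasurableSpace α]
  [OrderClosedTopology α] [SecondCountableTopology α]

theorem measurable_sampleRank (i : ι) : Measurable fun v : ι → α => sampleRank v i := by
  simp only [sampleRank, card_filter]
  exact Finset.measurable_sum _ fun j _ => Measurable.ite
    (measurableSet_le (measurable_pi_apply j) (measurable_pi_apply i)) measurable_const
    measurable_const

end SampleRank

section Exchangeable

variable {Ω ι α : Type*} [MeasurableSpace Ω] [MeasurableSpace α]

def Exchangeable (μ : Measure Ω) (X : Ω → ι → α) : Prop :=
  ∀ σ : Equiv.Perm ι, μ.map (fun ω => X ω ∘ σ) = μ.map X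

variable {μ : Measure Ω} {X : Ω → ι → α}

theorem Exchangeable.measure_preimage_comp_perm (hexch : Exchangeable μ X) (hX : Measurable X)
    (σ : Equiv.Perm ι) {B : Set (ι → α)} (hB : MeasurableSet B) :
    μ ((fun ω => X ω ∘ σ) ⁻¹' B) = μ (X ⁻¹' B) := by
  have hXσ : Measurable fun ω => X ω ∘ σ :=
    measurable_pi_lambda _ fun j => (measurable_pi_apply (σ j)).comp hX
  rw [← Measure.map_apply hXσ hB, hexch σ, Measure.map_apply hX hB]

variable [Fintype ι] [LinearOrder α] [TopologicalSpace α] [OpensMeasurableSpace α]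
  [OrderClosedTopology α] [SecondCountableTopology α]

theorem measurableSet_sampleRank_eq (hX : Measurable X) (i : ι) (r : ℕ) :
    MeasurableSet {ω | sampleRank (X ω) i = r} :=
  (measurable_sampleRank i).comp hX (measurableSet_singleton r)

theorem Exchangeable.measure_sampleRank_eq_comm (hexch : Exchangeable μ X) (hX : Measurable X)
    (i j : ι) (r : ℕ) :
    μ {ω | sampleRank (X ω) i = r} = μ {ω | sampleRank (X ω) j = r} := by
  classical
  have hswap : {ω | sampleRank (X ω) i = r} =
      (fun ω => X ω ∘ Equiv.swap i j) ⁻¹' {v | sampleRank v j = r} := by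
    ext ω
    simp [sampleRank_comp_equiv]
  rw [hswap]
  exact hexch.measure_preimage_comp_perm hX _ (measurable_sampleRank j (measurableSet_singleton r))

theorem sum_measure_sampleRank_eq (hX : Measurable X)
    (hties : ∀ᵐ ω ∂μ, Function.Injective (X ω)) {r : ℕ} (hr : r ∈ Icc 1 (Fintype.card ι)) :
    ∑ i, μ {ω | sampleRank (X ω) i = r} = μ Set.univ := by
  have hone : ∀ᵐ ω ∂μ, ∑ i, {ω | sampleRank (X ω) i = r}.indicator 1 ω = (1 : ENNReal) := by
    filter_upwards [hties] with ω hω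
    obtain ⟨i₀, hi₀, huniq⟩ := existsUnique_sampleRank_eq hω hr
    rw [sum_eq_single i₀]
    · exact Set.indicator_of_mem (show ω ∈ {ω | sampleRank (X ω) i₀ = r} from hi₀) _
    · exact fun j _ hj => Set.indicator_of_notMem
        (show ω ∉ {ω | sampleRank (X ω) j = r} from fun h => hj (huniq j h)) _
    · simp
  calc ∑ i, μ {ω | sampleRank (X ω) i = r}
      = ∫⁻ ω, ∑ i, {ω | sampleRank (X ω) i = r}.indicator 1 ω ∂μ := by
        rw [lintegral_finsetSum _ fun i _ =>
          measurable_one.indicator (measurableSet_sampleRank_eq hX i r)]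
        simp [lintegral_indicator_one (measurableSet_sampleRank_eq hX _ r)]
    _ = μ Set.univ := by rw [lintegral_congr_ae hone, lintegral_one]

variable [IsProbabilityMeasure μ]

theorem Exchangeable.measure_sampleRank_eq (hexch : Exchangeable μ X) (hX : Measurable X)
    (hties : ∀ᵐ ω ∂μ, Function.Injective (X ω)) (i : ι) {r : ℕ}
    (hr : r ∈ Icc 1 (Fintype.card ι)) :
    μ {ω | sampleRank (X ω) i = r} = (Fintype.card ι : ENNReal)⁻¹ := by
  have hsum := sum_measure_sampleRank_eq hX hties hr
  simp only [hexch.measure_sampleRank_eq_comm hX _ i r, sum_const, card_univ, nsmul_eq_mul,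
    measure_univ] at hsum
  exact ENNReal.eq_inv_of_mul_eq_one_left (by rwa [mul_comm])

theorem Exchangeable.measureReal_sampleRank_mem (hexch : Exchangeable μ X) (hX : Measurable X)
    (hties : ∀ᵐ ω ∂μ, Function.Injective (X ω)) (i : ι) {s : Finset ℕ}
    (hs : s ⊆ Icc 1 (Fintype.card ι)) :
    μ.real {ω | sampleRank (X ω) i ∈ s} = #s / Fintype.card ι := by
  have hfiber : ∀ r ∈ s, μ.real ((fun ω => sampleRank (X ω) i) ⁻¹' {r}) = (Fintype.card ι : ℝ)⁻¹ :=
    fun r hr => by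
      change (μ {ω | sampleRank (X ω) i = r}).toReal = _
      rw [hexch.measure_sampleRank_eq hX hties i (hs hr), ENNReal.toReal_inv,
        ENNReal.toReal_natCast]
  change μ.real ((fun ω => sampleRank (X ω) i) ⁻¹' s) = _
  rw [← sum_measureReal_preimage_singleton s fun r _ => measurableSet_sampleRank_eq hX i r,
    sum_congr rfl hfiber, sum_const, nsmul_eq_mul, div_eq_mul_inv]

end Exchangeable

theorem card_Icc_one_union_Ioc_add_le {a b c : ℕ} (hbc : b ≤ c) :
    #(Icc 1 a ∪ Ioc b c) + b ≤ a + c := by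
  have := card_union_le (Icc 1 a) (Ioc b c)
  rw [Nat.card_Icc, Nat.card_Ioc] at this
  omega

theorem card_Icc_one_union_Ioc_natCeil_div_le {α : ℝ} (n : ℕ) (hα : 0 ≤ α) :
    (#(Icc 1 ⌈α / 2 * n⌉₊ ∪ Ioc ⌈(1 - α / 2) * n⌉₊ (n + 1)) : ℝ) / (n + 1) ≤
      α + 2 / (n + 1) := by
  have hk₂ : ⌈(1 - α / 2) * n⌉₊ ≤ n + 1 := Nat.ceil_le.2 (by push_cast; nlinarith)
  have hcard : (#(Icc 1 ⌈α / 2 * n⌉₊ ∪ Ioc ⌈(1 - α / 2) * n⌉₊ (n + 1)) : ℝ) +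
      ⌈(1 - α / 2) * n⌉₊ ≤ ⌈α / 2 * n⌉₊ + (n + 1) := by
    exact_mod_cast card_Icc_one_union_Ioc_add_le hk₂
  have hk₁' : (⌈α / 2 * n⌉₊ : ℝ) < α / 2 * n + 1 := Nat.ceil_lt_add_one (by positivity)
  have hk₂' : (1 - α / 2) * n ≤ (⌈(1 - α / 2) * n⌉₊ : ℝ) := Nat.le_ceil _
  rw [div_le_iff₀ (by positivity), add_mul, div_mul_cancel₀ _ (by positivity)]
  nlinarith

theorem one_sub_probReal_compl_le {Ω : Type*} [MeasurableSpace Ω] (μ : Measure Ω)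
    [IsProbabilityMeasure μ] (s : Set Ω) : 1 - μ.real sᶜ ≤ μ.real s := by
  simpa [Set.sdiff_compl] using le_measureReal_sdiff (μ := μ) (s₁ := Set.univ) (s₂ := sᶜ)

section Coverage

variable {n : ℕ} {γ : ℝ}

theorem sampleRank_last_le_of_lt_empQuantile (v : Fin (n + 1) → ℝ) (hk : ⌈γ * n⌉₊ ∈ Icc 1 n)
    (h : v (Fin.last n) < empQuantile γ fun j : Fin n => v j.castSucc) :
    sampleRank v (Fin.last n) ≤ ⌈γ * n⌉₊ := by
  have hle : #{j : Fin n | v j.castSucc ≤ v (Fin.last n)} ≤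
      #{j : Fin n | v j.castSucc < empQuantile γ fun i : Fin n => v i.castSucc} :=
    card_le_card (monotone_filter_right _ fun _ _ hj => hj.trans_lt h)
  have := card_lt_empQuantile_lt_natCeil (fun j => v j.castSucc) hk
  rw [sampleRank_last]
  omega

theorem lt_sampleRank_last_of_empQuantile_lt (v : Fin (n + 1) → ℝ) (hk : ⌈γ * n⌉₊ ∈ Icc 1 n)
    (h : (empQuantile γ fun j : Fin n => v j.castSucc) < v (Fin.last n)) :
    ⌈γ * n⌉₊ < sampleRank v (Fin.last n) := by
  have hle : #{j : Fin n | v j.castSucc ≤ empQuantile γ fun i : Fin n => v i.castSucc} ≤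
      #{j : Fin n | v j.castSucc ≤ v (Fin.last n)} :=
    card_le_card (monotone_filter_right _ fun _ _ hj => hj.trans h.le)
  have := natCeil_le_card_le_empQuantile (fun j => v j.castSucc) hk
  rw [sampleRank_last]
  omega

theorem sampleRank_last_mem_of_notMem_Icc {γ₁ γ₂ : ℝ} (v : Fin (n + 1) → ℝ)
    (hk₁ : ⌈γ₁ * n⌉₊ ∈ Icc 1 n) (hk₂ : ⌈γ₂ * n⌉₊ ∈ Icc 1 n)
    (h : v (Fin.last n) ∉ Set.Icc (empQuantile γ₁ fun j : Fin n => v j.castSucc)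
      (empQuantile γ₂ fun j : Fin n => v j.castSucc)) :
    sampleRank v (Fin.last n) ∈ Icc 1 ⌈γ₁ * n⌉₊ ∪ Ioc ⌈γ₂ * n⌉₊ (n + 1) := by
  rw [Set.mem_Icc, not_and_or, not_le, not_le] at h
  rcases h with h | h
  · exact mem_union_left _ <| mem_Icc.2
      ⟨sampleRank_pos _ _, sampleRank_last_le_of_lt_empQuantile v hk₁ h⟩
  · exact mem_union_right _ <| mem_Ioc.2
      ⟨lt_sampleRank_last_of_empQuantile_lt v hk₂ h, by simpa using sampleRank_le_card v _⟩

end Coverage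

theorem split_conformal_two_sided_coverage
    {Ω : Type*} [MeasurableSpace Ω] (μ : Measure Ω) [IsProbabilityMeasure μ]
    (n : ℕ) (hn : 0 < n) (S : Fin (n + 1) → Ω → ℝ)
    (hmeas : ∀ i, Measurable (S i))
    (hexch : ∀ σ : Equiv.Perm (Fin (n + 1)),
      Measure.map (fun ω => fun i => S (σ i) ω) μ =
        Measure.map (fun ω => fun i => S i ω) μ)
    (hties : ∀ᵐ ω ∂μ, Function.Injective (fun i => S i ω))
    (α : ℝ) (hα : α ∈ Set.Ioo (0 : ℝ) 1) :
    1 - α - 2 / (n + 1) ≤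
      (μ {ω | empQuantile (α / 2) (fun i : Fin n => S i.castSucc ω) ≤ S (Fin.last n) ω ∧
              S (Fin.last n) ω ≤
                empQuantile (1 - α / 2) (fun i : Fin n => S i.castSucc ω)}).toReal := by
  obtain ⟨hα0, hα1⟩ := hα
  have hexch : Exchangeable μ fun ω i => S i ω := hexch
  have hk₁ : ⌈α / 2 * n⌉₊ ∈ Icc 1 n := natCeil_mul_mem_Icc (by positivity) (by linarith) hn
  have hk₂ : ⌈(1 - α / 2) * n⌉₊ ∈ Icc 1 n := natCeil_mul_mem_Icc (by linarith) (by linarith) hn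
  set F := Icc 1 ⌈α / 2 * n⌉₊ ∪ Ioc ⌈(1 - α / 2) * n⌉₊ (n + 1)
  set G := {ω | empQuantile (α / 2) (fun i : Fin n => S i.castSucc ω) ≤ S (Fin.last n) ω ∧
    S (Fin.last n) ω ≤ empQuantile (1 - α / 2) (fun i : Fin n => S i.castSucc ω)}
  have hmiss : Gᶜ ⊆ {ω | sampleRank (fun i => S i ω) (Fin.last n) ∈ F} := fun ω hω =>
    sampleRank_last_mem_of_notMem_Icc (fun i => S i ω) hk₁ hk₂ hω
  have hFsub : F ⊆ Icc 1 (Fintype.card (Fin (n + 1))) := fun r hr => by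
    simp only [F, mem_union, mem_Icc, mem_Ioc, Fintype.card_fin] at hr hk₁ ⊢
    omega
  calc 1 - α - 2 / (n + 1) ≤ 1 - #F / (n + 1) := by
        linarith [card_Icc_one_union_Ioc_natCeil_div_le n hα0.le]
    _ = 1 - μ.real {ω | sampleRank (fun i => S i ω) (Fin.last n) ∈ F} := by
        rw [hexch.measureReal_sampleRank_mem (measurable_pi_lambda _ hmeas) hties _ hFsub]
        simp
    _ ≤ 1 - μ.real Gᶜ := sub_le_sub_left (measureReal_mono hmiss) 1
    _ ≤ μ.real G := one_sub_probReal_compl_le μ G
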